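/- In a pure composition, every transition is a synchronisation of at most one transition on each side: if the composition of nets with boundaries N_l : k → n and N_r : n → l is pure, then every minimal synchronisation (U, V) of N_l and N_r satisfies |U| ≤ 1 and |V| ≤ 1, and the common boundary set tgt(U) = src(V) contains at most one port. -/

import Mathlib

/-! Core definitions: nets with boundaries (Sobocinski et al.),
composition, tensor, isomorphism, step firing semantics, ports,
connections, networks, bases, wiring expressions and decompositions. -/

namespace NWB

/-- A net with boundaries `N : k → l` (without the contention axioms,
which are packaged separately in `IsContention`). -/
structure NetB (k l : ℕ) : Type 1 where
  P : Type
  T : Type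
  finP : Finite P
  finT : Finite T
  pre : T → Set P
  post : T → Set P
  src : T → Set (Fin k)
  tgt : T → Set (Fin l)
  con : T → T → Prop

/-- The contention relation axioms: reflexive, symmetric, and forced whenever
two transitions share a pre-place, post-place, or boundary port. -/
def IsContention {k l : ℕ} (N : NetB k l) : Prop :=
  (∀ t, N.con t t) ∧ (∀ t u, N.con t u → N.con u t) ∧
  (∀ t u,
    ((N.pre t ∩ N.pre u).Nonempty ∨ (N.post t ∩ N.post u).Nonempty ∨
     (N.src t ∩ N.src u).Nonempty ∨ (N.tgt t ∩ N.tgt u).Nonempty) → N.con t u)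

def setPre {k l : ℕ} (N : NetB k l) (U : Set N.T) : Set N.P := ⋃ u ∈ U, N.pre u
def setPost {k l : ℕ} (N : NetB k l) (U : Set N.T) : Set N.P := ⋃ u ∈ U, N.post u
def setSrc {k l : ℕ} (N : NetB k l) (U : Set N.T) : Set (Fin k) := ⋃ u ∈ U, N.src u
def setTgt {k l : ℕ} (N : NetB k l) (U : Set N.T) : Set (Fin l) := ⋃ u ∈ U, N.tgt u

/-- Mutually independent set of transitions: no two distinct members in contention. -/
def MI {k l : ℕ} (N : NetB k l) (U : Set N.T) : Prop :=
  ∀ u ∈ U, ∀ v ∈ U, N.con u v → u = v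

/-- Contention lifted to sets of transitions. -/
def setCon {k l : ℕ} (N : NetB k l) (U V : Set N.T) : Prop :=
  ∃ u ∈ U, ∃ v ∈ V, N.con u v

/-- A synchronisation between `M : l → m` and `N : m → n`. -/
structure Sync {l m n : ℕ} (M : NetB l m) (N : NetB m n) where
  U : Set M.T
  V : Set N.T
  miU : MI M U
  miV : MI N V
  bd : setTgt M U = setSrc N V

def Sync.Trivial {l m n : ℕ} {M : NetB l m} {N : NetB m n} (s : Sync M N) : Prop :=
  s.U = ∅ ∧ s.V = ∅

/-- A minimal synchronisation: non-trivial, and every componentwise-smaller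
synchronisation is trivial or equal to it. -/
def Sync.Minimal {l m n : ℕ} {M : NetB l m} {N : NetB m n} (s : Sync M N) : Prop :=
  ¬ s.Trivial ∧
  ∀ s' : Sync M N, s'.U ⊆ s.U → s'.V ⊆ s.V → (s'.Trivial ∨ (s'.U = s.U ∧ s'.V = s.V))

theorem sync_finite {l m n : ℕ} (M : NetB l m) (N : NetB m n) : Finite (Sync M N) := by
  haveI := M.finT; haveI := N.finT
  apply Finite.of_injective (fun s : Sync M N => (s.U, s.V))
  intro s s' h
  simp only [Prod.mk.injEq] at h
  obtain ⟨h1, h2⟩ := h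
  cases s; cases s'
  simp_all

/-- Composition along a common boundary. -/
def comp {l m n : ℕ} (M : NetB l m) (N : NetB m n) : NetB l n where
  P := M.P ⊕ N.P
  T := {s : Sync M N // s.Minimal}
  finP := by haveI := M.finP; haveI := N.finP; exact inferInstance
  finT := by haveI := sync_finite M N; exact inferInstance
  pre s := (Sum.inl '' setPre M s.1.U) ∪ (Sum.inr '' setPre N s.1.V)
  post s := (Sum.inl '' setPost M s.1.U) ∪ (Sum.inr '' setPost N s.1.V)
  src s := setSrc M s.1.U
  tgt s := setTgt N s.1.V
  con s s' := setCon M s.1.U s'.1.U ∨ setCon N s.1.V s'.1.V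

/-- Tensor product of nets with boundaries. -/
def tensor {l m k n : ℕ} (M : NetB l m) (N : NetB k n) : NetB (l + k) (m + n) where
  P := M.P ⊕ N.P
  T := M.T ⊕ N.T
  finP := by haveI := M.finP; haveI := N.finP; exact inferInstance
  finT := by haveI := M.finT; haveI := N.finT; exact inferInstance
  pre t := match t with
    | Sum.inl t => Sum.inl '' M.pre t
    | Sum.inr t => Sum.inr '' N.pre t
  post t := match t with
    | Sum.inl t => Sum.inl '' M.post t
    | Sum.inr t => Sum.inr '' N.post t
  src t := match t with
    | Sum.inl t => Fin.castAdd k '' M.src t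
    | Sum.inr t => Fin.natAdd l '' N.src t
  tgt t := match t with
    | Sum.inl t => Fin.castAdd n '' M.tgt t
    | Sum.inr t => Fin.natAdd m '' N.tgt t
  con t u := match t, u with
    | Sum.inl t, Sum.inl u => M.con t u
    | Sum.inr t, Sum.inr u => N.con t u
    | _, _ => False

/-- Isomorphism of nets with boundaries: bijections on places and transitions
preserving pre-sets, post-sets, boundary maps and contention. -/
structure NetIso {k l : ℕ} (M N : NetB k l) where
  ep : M.P ≃ N.P
  et : M.T ≃ N.T
  pre_eq : ∀ t, N.pre (et t) = ep '' M.pre t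
  post_eq : ∀ t, N.post (et t) = ep '' M.post t
  src_eq : ∀ t, N.src (et t) = M.src t
  tgt_eq : ∀ t, N.tgt (et t) = M.tgt t
  con_iff : ∀ t u, N.con (et t) (et u) ↔ M.con t u

def Iso {k l : ℕ} (M N : NetB k l) : Prop := Nonempty (NetIso M N)

/-- Transport a net along equalities of its boundary sizes. -/
def castNet {k l k' l' : ℕ} (h1 : k = k') (h2 : l = l') (N : NetB k l) : NetB k' l' where
  P := N.P
  T := N.T
  finP := N.finP
  finT := N.finT
  pre := N.pre
  post := N.post
  src t := Fin.cast h1 '' N.src t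
  tgt t := Fin.cast h2 '' N.tgt t
  con := N.con

def emptyNet : NetB 0 0 where
  P := Empty
  T := Empty
  finP := inferInstance
  finT := inferInstance
  pre t := t.elim
  post t := t.elim
  src t := t.elim
  tgt t := t.elim
  con t _ := t.elim

/-- The step firing semantics: `Fires N X X' α β` iff the LTS `⟦N⟧` has a
transition `X →⟨α,β⟩ X'`. -/
def Fires {k l : ℕ} (N : NetB k l) (X X' : Set N.P) (α : Set (Fin k)) (β : Set (Fin l)) :
    Prop :=
  ∃ U : Set N.T, MI N U ∧ setPre N U ⊆ X ∧ setPost N U ∩ X = ∅ ∧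
    X' = (X \ setPre N U) ∪ setPost N U ∧ setSrc N U = α ∧ setTgt N U = β

/-! ### Ports, connections and networks -/

/-- The ports of a net: an in-port and an out-port for each place,
together with the left and right boundary ports. -/
def Port {k l : ℕ} (N : NetB k l) : Type := (N.P ⊕ N.P) ⊕ (Fin k ⊕ Fin l)

def portIn {k l : ℕ} {N : NetB k l} (p : N.P) : Port N := Sum.inl (Sum.inl p)
def portOut {k l : ℕ} {N : NetB k l} (p : N.P) : Port N := Sum.inl (Sum.inr p)
def bLeft {k l : ℕ} {N : NetB k l} (i : Fin k) : Port N := Sum.inr (Sum.inl i)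
def bRight {k l : ℕ} {N : NetB k l} (j : Fin l) : Port N := Sum.inr (Sum.inr j)

/-- The portset of a transition. -/
def tports {k l : ℕ} (N : NetB k l) (t : N.T) : Set (Port N) :=
  (portOut '' N.pre t) ∪ (portIn '' N.post t) ∪ (bLeft '' N.src t) ∪ (bRight '' N.tgt t)

/-- The connection of a port `q`: the portsets (minus `q`) of all transitions
properly connecting to `q`. -/
def conn {k l : ℕ} (N : NetB k l) (q : Port N) : Set (Set (Port N)) :=
  { K | ∃ t : N.T, {q} ⊂ tports N t ∧ K = tports N t \ {q} }

/-- The connection of `q` restricted to a set `R` of ports. -/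
def connR {k l : ℕ} (N : NetB k l) (R : Set (Port N)) (q : Port N) :
    Set (Set (Port N)) :=
  { K' | ∃ K ∈ conn N q, (K ∩ R).Nonempty ∧ K' = K ∩ R }

/-- Extended ports of the left part of an oriented partition. -/
def eportsL {k l : ℕ} (N : NetB k l) (Pl : Set N.P) : Set (Port N) :=
  (portIn '' Pl) ∪ (portOut '' Pl) ∪ Set.range (bLeft (N := N))

/-- Extended ports of the right part of an oriented partition. -/
def eportsR {k l : ℕ} (N : NetB k l) (Pr : Set N.P) : Set (Port N) :=
  (portIn '' Pr) ∪ (portOut '' Pr) ∪ Set.range (bRight (N := N))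

/-- The network `net(P_l → P_r)`. -/
def networkLR {k l : ℕ} (N : NetB k l) (Pl Pr : Set N.P) :
    Set (Set (Set (Port N))) :=
  { c | ∃ q ∈ eportsL N Pl, c = connR N (eportsR N Pr) q }

/-- The network `net(P_r → P_l)`. -/
def networkRL {k l : ℕ} (N : NetB k l) (Pl Pr : Set N.P) :
    Set (Set (Set (Port N))) :=
  { c | ∃ q ∈ eportsR N Pr, c = connR N (eportsL N Pl) q }

/-- `b` is a basis of the network `M`: every connection in `M` is a union of
basis connections. -/
def IsBasis {C : Type} {m : ℕ} (b : Fin m → Set C) (M : Set (Set C)) : Prop :=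
  ∀ c ∈ M, ∃ S : Finset (Fin m), c = ⋃ i ∈ S, b i

/-- The dimension of a network: the size of its smallest basis. -/
noncomputable def netDim {C : Type} (M : Set (Set C)) : ℕ :=
  sInf { m | ∃ b : Fin m → Set C, IsBasis b M }

/-- Purity of a composition `N_l ; N_r`: no transition of either component
connects to two different shared boundary ports. -/
def Pure {k n l : ℕ} (Nl : NetB k n) (Nr : NetB n l) : Prop :=
  (∀ j : Fin n, ∀ K ∈ conn Nl (bRight j), ∀ i : Fin n, bRight i ∉ K) ∧
  (∀ j : Fin n, ∀ K ∈ conn Nr (bLeft j), ∀ i : Fin n, bLeft i ∉ K)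

/-! ### Wiring expressions and decompositions -/

/-- Nets with boundaries of arbitrary boundary sizes. -/
def NetS : Type 1 := Σ (k : ℕ) (l : ℕ), NetB k l

/-- Composition on `NetS` (junk value on boundary mismatch). -/
def seqS (X Y : NetS) : NetS :=
  if h : X.2.1 = Y.1 then ⟨X.1, Y.2.1, comp (castNet rfl h X.2.2) Y.2.2⟩
  else ⟨0, 0, emptyNet⟩

def tenS (X Y : NetS) : NetS := ⟨X.1 + Y.1, X.2.1 + Y.2.1, tensor X.2.2 Y.2.2⟩

/-- Wiring expressions: binary trees with `;` and `⊗` nodes and variables at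
the leaves. -/
inductive WExpr (V : Type) : Type
  | leaf : V → WExpr V
  | seq : WExpr V → WExpr V → WExpr V
  | ten : WExpr V → WExpr V → WExpr V

/-- Semantics of a wiring expression under a variable assignment. -/
def sem {V : Type} (A : V → NetS) : WExpr V → NetS
  | .leaf x => A x
  | .seq t₁ t₂ => seqS (sem A t₁) (sem A t₂)
  | .ten t₁ t₂ => tenS (sem A t₁) (sem A t₂)

/-- Compatibility of an assignment with an expression: at each `;` node the
shared boundaries match. -/
def WT {V : Type} (A : V → NetS) : WExpr V → Prop
  | .leaf _ => True
  | .seq t₁ t₂ => WT A t₁ ∧ WT A t₂ ∧ (sem A t₁).2.1 = (sem A t₂).1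
  | .ten t₁ t₂ => WT A t₁ ∧ WT A t₂

/-- The wiring decomposition `(t, A)` has width `w`: every leaf net has
boundaries and number of places `≤ w`, and every subexpression has
boundaries `≤ w`. -/
def HasWidth {V : Type} (A : V → NetS) (w : ℕ) : WExpr V → Prop
  | .leaf x => (A x).1 ≤ w ∧ Nat.card (A x).2.2.P ≤ w ∧ (A x).2.1 ≤ w
  | .seq t₁ t₂ => HasWidth A w t₁ ∧ HasWidth A w t₂ ∧
      (sem A (.seq t₁ t₂)).1 ≤ w ∧ (sem A (.seq t₁ t₂)).2.1 ≤ w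
  | .ten t₁ t₂ => HasWidth A w t₁ ∧ HasWidth A w t₂ ∧
      (sem A (.ten t₁ t₂)).1 ≤ w ∧ (sem A (.ten t₁ t₂)).2.1 ≤ w

/-- `(t, A)` is a wiring decomposition of `N : k → l`: the assignment maps
variables to genuine nets with boundaries, is compatible with `t`, and
`⟦t⟧_A ≅ N`. -/
def IsDecompOf {V : Type} {k l : ℕ} (A : V → NetS) (t : WExpr V) (N : NetB k l) : Prop :=
  (∀ x, IsContention (A x).2.2) ∧ WT A t ∧
  ∃ (h1 : (sem A t).1 = k) (h2 : (sem A t).2.1 = l),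
    Iso (castNet h1 h2 (sem A t).2.2) N

/-- A net has decomposition width `w` if it has a wiring decomposition of
width `w`. -/
def HasDecompWidth {k l : ℕ} (N : NetB k l) (w : ℕ) : Prop :=
  ∃ (Var : Type) (A : Var → NetS) (t : WExpr Var),
    IsDecompOf A t N ∧ HasWidth A w t

/-- A pure wiring decomposition: at every `;` node the composition of the two
subexpression nets is pure. -/
def PureExpr {V : Type} (A : V → NetS) : WExpr V → Prop
  | .leaf _ => True
  | .seq t₁ t₂ => PureExpr A t₁ ∧ PureExpr A t₂ ∧
      ∀ (h : (sem A t₁).2.1 = (sem A t₂).1),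
        Pure (castNet rfl h (sem A t₁).2.2) (sem A t₂).2.2
  | .ten t₁ t₂ => PureExpr A t₁ ∧ PureExpr A t₂

/-- One step of reassociation of `;` or `⊗`, anywhere inside an expression. -/
inductive AssocStep {V : Type} : WExpr V → WExpr V → Prop
  | seqAssoc (a b c : WExpr V) : AssocStep (.seq (.seq a b) c) (.seq a (.seq b c))
  | tenAssoc (a b c : WExpr V) : AssocStep (.ten (.ten a b) c) (.ten a (.ten b c))
  | seqCongrL {a a' : WExpr V} (b : WExpr V) :
      AssocStep a a' → AssocStep (.seq a b) (.seq a' b)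
  | seqCongrR (a : WExpr V) {b b' : WExpr V} :
      AssocStep b b' → AssocStep (.seq a b) (.seq a b')
  | tenCongrL {a a' : WExpr V} (b : WExpr V) :
      AssocStep a a' → AssocStep (.ten a b) (.ten a' b)
  | tenCongrR (a : WExpr V) {b b' : WExpr V} :
      AssocStep b b' → AssocStep (.ten a b) (.ten a b')

/-- Equivalence of wiring expressions up to associativity of `;` and `⊗`. -/
def AssocEquiv {V : Type} : WExpr V → WExpr V → Prop := Relation.EqvGen AssocStep

/-! ### Concrete families of nets -/

/-- The clique net `C_n : 0 → 0`, with the minimal contention relation. -/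
def clique (n : ℕ) : NetB 0 0 where
  P := Fin n
  T := {p : Fin n × Fin n // p.1 ≠ p.2}
  finP := inferInstance
  finT := inferInstance
  pre t := {t.1.1}
  post t := {t.1.2}
  src _ := ∅
  tgt _ := ∅
  con t u := t.1.1 = u.1.1 ∨ t.1.2 = u.1.2

/-- The subset net `P_n : 0 → 0`: a place `S` (= `none`), places `[n]`, and for
each `A ⊆ [n]` a transition `S → A`; the minimal contention relation is total
since all pre-sets are `{S}`. -/
def subsetNet (n : ℕ) : NetB 0 0 where
  P := Option (Fin n)
  T := Set (Fin n)
  finP := inferInstance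
  finT := inferInstance
  pre _ := {none}
  post A := some '' A
  src _ := ∅
  tgt _ := ∅
  con _ _ := True

/-- The tree net `T_Δ^{n,k} : 0 → 0`: places are nodes of the complete n-ary
tree of depth k (lists over `Fin n` of length ≤ k); each non-leaf node has a
single transition to the set of its n children. The minimal contention
relation is equality. -/
def treeD (n k : ℕ) : NetB 0 0 where
  P := {l : List (Fin n) // l.length ≤ k}
  T := {l : List (Fin n) // l.length < k}
  finP := (List.finite_length_le (Fin n) k).to_subtype
  finT := (List.finite_length_lt (Fin n) k).to_subtype
  pre t := {⟨t.1, t.2.le⟩}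
  post t := {p | ∃ i : Fin n, p.1 = t.1 ++ [i]}
  src _ := ∅
  tgt _ := ∅
  con t u := t = u

/-- The tree net `T_Λ^{n,k} : 0 → 0`: as `T_Δ^{n,k}` but with a separate
transition from each non-leaf node to each of its children. The minimal
contention relation relates transitions with the same parent node. -/
def treeL (n k : ℕ) : NetB 0 0 where
  P := {l : List (Fin n) // l.length ≤ k}
  T := {l : List (Fin n) // l.length < k} × Fin n
  finP := (List.finite_length_le (Fin n) k).to_subtype
  finT := by
    haveI : Finite {l : List (Fin n) // l.length < k} :=
      (List.finite_length_lt (Fin n) k).to_subtype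
    exact inferInstance
  pre t := {⟨t.1.1, t.1.2.le⟩}
  post t := {p | p.1 = t.1.1 ++ [t.2]}
  src _ := ∅
  tgt _ := ∅
  con t u := t.1 = u.1

/-- The grid net `G_n : 0 → 0`: places `[n] × [n]`, a transition from each
place to its right neighbour and to its lower neighbour; the minimal
contention relation relates transitions sharing a pre-place or post-place. -/
def grid (n : ℕ) : NetB 0 0 where
  P := Fin n × Fin n
  T := {e : (Fin n × Fin n) × (Fin n × Fin n) //
        (e.2.1 = e.1.1 ∧ (e.2.2 : ℕ) = (e.1.2 : ℕ) + 1) ∨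
        ((e.2.1 : ℕ) = (e.1.1 : ℕ) + 1 ∧ e.2.2 = e.1.2)}
  finP := inferInstance
  finT := inferInstance
  pre e := {e.1.1}
  post e := {e.1.2}
  src _ := ∅
  tgt _ := ∅
  con t u := t.1.1 = u.1.1 ∨ t.1.2 = u.1.2

end NWB

/-! Purity forces every transition of `N_l` to touch at most one right boundary port and every
transition of `N_r` at most one left boundary port. Given a minimal synchronisation `(U, V)` and
`u ∈ U`, the pair formed by `{u}` and the transitions of `V` meeting `tgt u` is then again a
synchronisation, since each such transition has its single left port in `tgt u`; by minimality it
is all of `(U, V)`, so `U = {u}`. The same argument applies to `V`, and `tgt U = tgt u` has at most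
one element. -/

lemma Set.eq_biUnion_inter_nonempty_of_biUnion_eq {ι κ α : Type*} {A : ι → Set α}
    {B : κ → Set α} {U : Set ι} {V : Set κ} (h : ⋃ i ∈ U, A i = ⋃ j ∈ V, B j)
    (hB : ∀ j, (B j).Subsingleton) {i : ι} (hi : i ∈ U) :
    A i = ⋃ j ∈ {j ∈ V | (B j ∩ A i).Nonempty}, B j := by
  ext x
  simp only [Set.mem_iUnion, Set.mem_sep_iff, exists_prop]
  constructor
  · intro hx
    obtain ⟨j, hj, hxj⟩ := Set.mem_iUnion₂.1 (h ▸ Set.mem_biUnion hi hx)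
    exact ⟨j, ⟨hj, x, hxj, hx⟩, hxj⟩
  · rintro ⟨j, ⟨-, y, hyj, hyi⟩, hxj⟩
    exact hB j hyj hxj ▸ hyi

namespace NWB

lemma MI.mono {k l : ℕ} {N : NetB k l} {U U' : Set N.T} (hU : MI N U) (h : U' ⊆ U) : MI N U' :=
  fun u hu v hv => hU u (h hu) v (h hv)

lemma MI.of_subsingleton {k l : ℕ} {N : NetB k l} {U : Set N.T} (hU : U.Subsingleton) : MI N U :=
  fun _ hu _ hv _ => hU hu hv

lemma setTgt_subsingleton {k l : ℕ} {N : NetB k l} {U : Set N.T} (hU : U.Subsingleton)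
    (htgt : ∀ u, (N.tgt u).Subsingleton) : (setTgt N U).Subsingleton := by
  rcases hU.eq_empty_or_singleton with rfl | ⟨u, rfl⟩
  · simp [setTgt]
  · simpa [setTgt] using htgt u

section Ports

variable {k l : ℕ} {N : NetB k l}

lemma bLeft_injective : Function.Injective (bLeft (N := N)) :=
  fun _ _ h => Sum.inl_injective (Sum.inr_injective h)

lemma bRight_injective : Function.Injective (bRight (N := N)) :=
  fun _ _ h => Sum.inr_injective (Sum.inr_injective h)

lemma bLeft_mem_tports {t : N.T} {i : Fin k} (hi : i ∈ N.src t) : bLeft i ∈ tports N t :=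
  Or.inl (Or.inr ⟨i, hi, rfl⟩)

lemma bRight_mem_tports {t : N.T} {j : Fin l} (hj : j ∈ N.tgt t) : bRight j ∈ tports N t :=
  Or.inr ⟨j, hj, rfl⟩

lemma tports_diff_singleton_mem_conn {t : N.T} {q q' : Port N} (hq : q ∈ tports N t)
    (hq' : q' ∈ tports N t) (hne : q' ≠ q) : tports N t \ {q} ∈ conn N q :=
  ⟨t, (Set.ssubset_iff_of_subset (Set.singleton_subset_iff.2 hq)).2 ⟨q', hq', hne⟩, rfl⟩

lemma src_subsingleton_of_conn_bLeft (h : ∀ j, ∀ K ∈ conn N (bLeft j), ∀ i, bLeft i ∉ K)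
    (t : N.T) : (N.src t).Subsingleton := by
  intro i hi j hj
  by_contra hij
  have hne : bLeft i ≠ bLeft (N := N) j := bLeft_injective.ne hij
  exact h j _ (tports_diff_singleton_mem_conn (bLeft_mem_tports hj) (bLeft_mem_tports hi) hne) i
    ⟨bLeft_mem_tports hi, hne⟩

lemma tgt_subsingleton_of_conn_bRight
    (h : ∀ j, ∀ K ∈ conn N (bRight j), ∀ i, bRight i ∉ K) (t : N.T) :
    (N.tgt t).Subsingleton := by
  intro i hi j hj
  by_contra hij
  have hne : bRight i ≠ bRight (N := N) j := bRight_injective.ne hij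
  exact h j _ (tports_diff_singleton_mem_conn (bRight_mem_tports hj) (bRight_mem_tports hi) hne) i
    ⟨bRight_mem_tports hi, hne⟩

end Ports

namespace Sync

variable {l m n : ℕ} {M : NetB l m} {N : NetB m n}

def focusU (s : Sync M N) (hsrc : ∀ v, (N.src v).Subsingleton) {u : M.T} (hu : u ∈ s.U) :
    Sync M N where
  U := {u}
  V := {v ∈ s.V | (N.src v ∩ M.tgt u).Nonempty}
  miU := MI.of_subsingleton Set.subsingleton_singleton
  miV := s.miV.mono (Set.sep_subset _ _)
  bd := by
    simpa only [setTgt, setSrc, Set.biUnion_singleton] using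
      Set.eq_biUnion_inter_nonempty_of_biUnion_eq s.bd hsrc hu

def focusV (s : Sync M N) (htgt : ∀ u, (M.tgt u).Subsingleton) {v : N.T} (hv : v ∈ s.V) :
    Sync M N where
  U := {u ∈ s.U | (M.tgt u ∩ N.src v).Nonempty}
  V := {v}
  miU := s.miU.mono (Set.sep_subset _ _)
  miV := MI.of_subsingleton Set.subsingleton_singleton
  bd := by
    simpa only [setTgt, setSrc, Set.biUnion_singleton] using
      (Set.eq_biUnion_inter_nonempty_of_biUnion_eq s.bd.symm htgt hv).symm

lemma Minimal.subsingleton_U {s : Sync M N} (hs : s.Minimal)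
    (hsrc : ∀ v, (N.src v).Subsingleton) : s.U.Subsingleton := by
  intro u hu u' hu'
  obtain ⟨hU, -⟩ := (hs.2 (s.focusU hsrc hu) (Set.singleton_subset_iff.2 hu)
    (Set.sep_subset _ _)).resolve_left fun h => Set.singleton_ne_empty u h.1
  have hu'' : u' ∈ (s.focusU hsrc hu).U := hU ▸ hu'
  exact (Set.mem_singleton_iff.1 hu'').symm

lemma Minimal.subsingleton_V {s : Sync M N} (hs : s.Minimal)
    (htgt : ∀ u, (M.tgt u).Subsingleton) : s.V.Subsingleton := by
  intro v hv v' hv'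
  obtain ⟨-, hV⟩ := (hs.2 (s.focusV htgt hv) (Set.sep_subset _ _)
    (Set.singleton_subset_iff.2 hv)).resolve_left fun h => Set.singleton_ne_empty v h.2
  have hv'' : v' ∈ (s.focusV htgt hv).V := hV ▸ hv'
  exact (Set.mem_singleton_iff.1 hv'').symm

end Sync

theorem pure_minimal_sync_subsingleton_general {k n l : ℕ} (Nl : NetB k n) (Nr : NetB n l)
    (hpure : Pure Nl Nr) :
    ∀ s : Sync Nl Nr, s.Minimal →
      s.U.Subsingleton ∧ s.V.Subsingleton ∧ (setTgt Nl s.U).Subsingleton := by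
  intro s hs
  have htgt : ∀ u, (Nl.tgt u).Subsingleton := tgt_subsingleton_of_conn_bRight hpure.1
  have hsrc : ∀ v, (Nr.src v).Subsingleton := src_subsingleton_of_conn_bLeft hpure.2
  have hU := hs.subsingleton_U hsrc
  exact ⟨hU, hs.subsingleton_V htgt, setTgt_subsingleton hU htgt⟩

/-- in a pure composition every minimal synchronisation
`(U, V)` consists of at most one transition on each side, and the common
boundary set `tgt(U) = src(V)` contains at most one port. -/
theorem pure_minimal_sync_subsingleton {k n l : ℕ} (Nl : NetB k n) (Nr : NetB n l)
    (hNl : IsContention Nl) (hNr : IsContention Nr) (hpure : Pure Nl Nr) :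
    ∀ s : Sync Nl Nr, s.Minimal →
      s.U.Subsingleton ∧ s.V.Subsingleton ∧ (setTgt Nl s.U).Subsingleton :=
  pure_minimal_sync_subsingleton_general Nl Nr hpure

end NWB
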